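/- arXiv:1807.00580 — 2 statements merged into one kernel-verified Lean document; each statement's English description precedes it below -/
import Mathlib

section
/- For every n ≥ 3, the edge metric dimension of the generalized Petersen graph GP(n,1) equals 3. -/
/-!
`GP(n,1)` is the prism `Cₙ □ K₂`, so the distance between two of its vertices is the cyclic
distance of their indices plus one if they lie on different cycles.

Upper bound: `u₀, u₁, v₀` generate. The pair `u₀, v₀` tells outer edges, inner edges and spokes
apart (the difference of the two distances is `+1`, `-1` or `0`), and inside each class the two
adjacent vertices `0, 1` of `Cₙ` resolve the vertices and the edges of the cycle.

Lower bound: every vertex `a` has three neighbours. The three edges at `a` are at distance `0`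
from `a`, and from any other vertex `b` their distances take only the values `d(b,a) - 1` and
`d(b,a)`, so no two vertices can separate them.
-/

open SimpleGraph

/-- Distance from a vertex to an edge: `d(w,e) = min over endpoints`. -/
noncomputable def edgeDist {V : Type*} (G : SimpleGraph V) (w : V) (e : Sym2 V) : ℕ :=
  Sym2.lift ⟨fun x y => min (G.dist w x) (G.dist w y), fun x y => min_comm _ _⟩ e

/-- `S` is an edge metric generator: distinct edges get distinct distance vectors. -/
def IsEdgeGenerator {V : Type*} (G : SimpleGraph V) (S : Set V) : Prop :=
  ∀ e₁ ∈ G.edgeSet, ∀ e₂ ∈ G.edgeSet,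
    (∀ w ∈ S, edgeDist G w e₁ = edgeDist G w e₂) → e₁ = e₂

/-- The edge metric dimension: minimum cardinality of an edge metric generator. -/
noncomputable def edgeMetricDim {V : Type*} (G : SimpleGraph V) : ℕ :=
  sInf {n | ∃ S : Set V, S.Finite ∧ S.ncard = n ∧ IsEdgeGenerator G S}

/-- `S` resolves all pairs of vertices. -/
def IsResolving {V : Type*} (G : SimpleGraph V) (S : Set V) : Prop :=
  ∀ x y : V, (∀ w ∈ S, G.dist w x = G.dist w y) → x = y

/-- The metric dimension. -/
noncomputable def metricDim {V : Type*} (G : SimpleGraph V) : ℕ :=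
  sInf {n | ∃ S : Set V, S.Finite ∧ S.ncard = n ∧ IsResolving G S}

/-- The generalized Petersen graph `GP n k`: outer vertices `Sum.inl i` (the `uᵢ`),
inner vertices `Sum.inr i` (the `vᵢ`). -/
def GP (n k : ℕ) : SimpleGraph (Fin n ⊕ Fin n) :=
  SimpleGraph.fromRel (fun a b =>
    match a, b with
    | Sum.inl i, Sum.inl j => (j : ℕ) = ((i : ℕ) + 1) % n
    | Sum.inl i, Sum.inr j => i = j
    | Sum.inr i, Sum.inr j => (j : ℕ) = ((i : ℕ) + k) % n
    | _, _ => False)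

namespace SimpleGraph

variable {V W : Type*} {G : SimpleGraph V}

lemma Walk.le_add_length_of_lipschitz {f : V → ℕ} (hf : ∀ x y, G.Adj x y → f y ≤ f x + 1) {u v : V}
    (p : G.Walk u v) : f v ≤ f u + p.length := by
  induction p with
  | nil => simp
  | cons h _ ih => have := hf _ _ h; rw [Walk.length_cons]; omega

lemma exists_walk_length_le_of_descent {u : V} {f : V → ℕ} (hzero : ∀ v, f v = 0 → v = u)
    (hdesc : ∀ v, f v ≠ 0 → ∃ w, G.Adj w v ∧ f w + 1 = f v) (v : V) :
    ∃ p : G.Walk u v, p.length ≤ f v := by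
  induction hk : f v using Nat.strong_induction_on generalizing v with
  | _ k ih =>
    rcases eq_or_ne k 0 with rfl | hk0
    · obtain rfl := hzero v hk
      exact ⟨.nil, le_rfl⟩
    · obtain ⟨w, hwv, hw⟩ := hdesc v (hk ▸ hk0)
      obtain ⟨p, hp⟩ := ih (f w) (by omega) w rfl
      exact ⟨p.concat hwv, by rw [Walk.length_concat]; omega⟩

theorem dist_eq_of_descent {u : V} {f : V → ℕ} (hzero : ∀ v, f v = 0 ↔ v = u)
    (hlip : ∀ x y, G.Adj x y → f y ≤ f x + 1)
    (hdesc : ∀ v, f v ≠ 0 → ∃ w, G.Adj w v ∧ f w + 1 = f v) (v : V) :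
    G.dist u v = f v := by
  obtain ⟨p, hp⟩ := exists_walk_length_le_of_descent (fun v => (hzero v).1) hdesc v
  obtain ⟨q, hq⟩ := Reachable.exists_walk_length_eq_dist ⟨p⟩
  have := q.le_add_length_of_lipschitz hlip
  have := (hzero u).2 rfl
  have := dist_le p
  omega

lemma Hom.edist_map_le {G' : SimpleGraph W} (φ : G →g G') (u v : V) :
    G'.edist (φ u) (φ v) ≤ G.edist u v :=
  le_sInf <| by rintro _ ⟨p, rfl⟩; simpa using edist_le (p.map φ)

lemma Iso.dist_map {G' : SimpleGraph W} (φ : G ≃g G') (u v : V) :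
    G'.dist (φ u) (φ v) = G.dist u v := by
  refine congrArg ENat.toNat (le_antisymm (Hom.edist_map_le φ.toHom u v) ?_)
  simpa using Hom.edist_map_le φ.symm.toHom (φ u) (φ v)

lemma Connected.dist_boxProd {H : SimpleGraph W} (hG : G.Connected) (hH : H.Connected)
    (x y : V × W) : (G □ H).dist x y = G.dist x.1 y.1 + H.dist x.2 y.2 := by
  rw [SimpleGraph.dist, edist_boxProd]
  exact ENat.toNat_add (edist_ne_top_iff_reachable.2 (hG _ _))
    (edist_ne_top_iff_reachable.2 (hH _ _))

end SimpleGraph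

section EdgeMetricDimension

variable {V W : Type*} {G : SimpleGraph V}

@[simp]
lemma edgeDist_mk (w x y : V) : edgeDist G w s(x, y) = min (G.dist w x) (G.dist w y) := rfl

lemma IsEdgeGenerator.image {G' : SimpleGraph W} (φ : G ≃g G') {S : Set V}
    (h : IsEdgeGenerator G S) : IsEdgeGenerator G' (φ '' S) := by
  have hdist (w : V) (e : Sym2 W) : edgeDist G w (e.map φ.symm) = edgeDist G' (φ w) e := by
    induction e using Sym2.ind with
    | _ x y => simpa using congrArg₂ min (φ.symm.dist_map (φ w) x) (φ.symm.dist_map (φ w) y)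
  intro e₁ h₁ e₂ h₂ hd
  refine Sym2.map.injective φ.symm.injective <| h _ (φ.symm.map_mem_edgeSet_iff.2 h₁) _
    (φ.symm.map_mem_edgeSet_iff.2 h₂) fun w hw => ?_
  rw [hdist, hdist]
  exact hd _ (Set.mem_image_of_mem φ hw)

lemma edgeMetricDim_congr {G' : SimpleGraph W} (φ : G ≃g G') :
    edgeMetricDim G = edgeMetricDim G' := by
  unfold edgeMetricDim
  congr 1
  ext k
  constructor
  · rintro ⟨S, hS, rfl, h⟩
    exact ⟨φ '' S, hS.image φ, S.ncard_image_of_injective φ.injective, h.image φ⟩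
  · rintro ⟨S, hS, rfl, h⟩
    exact ⟨φ.symm '' S, hS.image φ.symm, S.ncard_image_of_injective φ.symm.injective,
      h.image φ.symm⟩

lemma edgeMetricDim_eq_of_isEdgeGenerator {k : ℕ} {S : Set V} (hS : S.Finite)
    (hgen : IsEdgeGenerator G S) (hcard : S.ncard = k)
    (hmin : ∀ T : Set V, T.Finite → IsEdgeGenerator G T → k ≤ T.ncard) :
    edgeMetricDim G = k := by
  refine le_antisymm (Nat.sInf_le ⟨S, hS, hcard, hgen⟩) (le_csInf ⟨k, S, hS, hcard, hgen⟩ ?_)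
  rintro _ ⟨T, hT, rfl, h⟩
  exact hmin T hT h

theorem not_isEdgeGenerator_of_subset_pair {a b y₁ y₂ y₃ : V} (h₁ : G.Adj a y₁)
    (h₂ : G.Adj a y₂) (h₃ : G.Adj a y₃) (h₁₂ : y₁ ≠ y₂) (h₁₃ : y₁ ≠ y₃) (h₂₃ : y₂ ≠ y₃)
    {S : Set V} (hS : S ⊆ {a, b}) : ¬IsEdgeGenerator G S := by
  intro hgen
  have hval (y : V) (hy : G.Adj a y) : min (G.dist b a) (G.dist b y) = G.dist b a ∨
      min (G.dist b a) (G.dist b y) + 1 = G.dist b a := by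
    have := hy.diff_dist_adj (u := b)
    omega
  have hsame (y z : V) (hy : G.Adj a y) (hz : G.Adj a z)
      (h : min (G.dist b a) (G.dist b y) = min (G.dist b a) (G.dist b z)) : y = z := by
    have := hgen s(a, y) hy s(a, z) hz fun w hw => by
      rcases hS hw with rfl | rfl
      · simp
      · simpa using h
    simpa [hy.ne'] using this
  rcases hval y₁ h₁ with hv₁ | hv₁ <;> rcases hval y₂ h₂ with hv₂ | hv₂ <;>
    rcases hval y₃ h₃ with hv₃ | hv₃
  all_goals first
    | exact h₁₂ (hsame _ _ h₁ h₂ (by omega))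
    | exact h₁₃ (hsame _ _ h₁ h₃ (by omega))
    | exact h₂₃ (hsame _ _ h₂ h₃ (by omega))

end EdgeMetricDimension

lemma Set.exists_subset_pair_of_ncard_le_two {α : Type*} [Nonempty α] {s : Set α}
    (hs : s.Finite) (h : s.ncard ≤ 2) : ∃ a b, s ⊆ {a, b} := by
  interval_cases hk : s.ncard
  · obtain rfl := (Set.ncard_eq_zero hs).1 hk
    exact ⟨Classical.arbitrary α, Classical.arbitrary α, Set.empty_subset _⟩
  · obtain ⟨a, rfl⟩ := Set.ncard_eq_one.1 hk
    exact ⟨a, a, by simp⟩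
  · obtain ⟨a, b, -, rfl⟩ := Set.ncard_eq_two.1 hk
    exact ⟨a, b, subset_rfl⟩

lemma three_le_ncard_of_isEdgeGenerator {V : Type*} [Nonempty V] {G : SimpleGraph V}
    (hdeg : ∀ a, ∃ y₁ y₂ y₃, G.Adj a y₁ ∧ G.Adj a y₂ ∧ G.Adj a y₃ ∧ y₁ ≠ y₂ ∧ y₁ ≠ y₃ ∧ y₂ ≠ y₃)
    {S : Set V} (hS : S.Finite) (hgen : IsEdgeGenerator G S) : 3 ≤ S.ncard := by
  by_contra! hlt
  obtain ⟨a, b, hab⟩ := Set.exists_subset_pair_of_ncard_le_two hS (by omega)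
  obtain ⟨y₁, y₂, y₃, h₁, h₂, h₃, h₁₂, h₁₃, h₂₃⟩ := hdeg a
  exact not_isEdgeGenerator_of_subset_pair h₁ h₂ h₃ h₁₂ h₁₃ h₂₃ hab hgen

section BoxProdBool

variable {V : Type*} {G : SimpleGraph V}

lemma edgeSet_boxProd_top_bool {e : Sym2 (V × Bool)}
    (he : e ∈ (G □ (⊤ : SimpleGraph Bool)).edgeSet) :
    (∃ e₀ ∈ G.edgeSet, ∃ t : Bool, e = e₀.map (·, t)) ∨ ∃ v, e = s((v, false), (v, true)) := by
  induction e using Sym2.ind with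
  | _ x y =>
    obtain ⟨x, s⟩ := x
    obtain ⟨y, t⟩ := y
    simp only [mem_edgeSet, boxProd_adj] at he
    rcases he with ⟨hxy, rfl⟩ | ⟨hst, rfl⟩
    · exact .inl ⟨s(x, y), hxy, s, rfl⟩
    · refine .inr ⟨x, ?_⟩
      cases s <;> cases t <;> simp_all [Sym2.eq_swap]

lemma edgeDist_boxProd_top_bool_map (hG : G.Connected) (w : V) (s t : Bool) (e : Sym2 V) :
    edgeDist (G □ (⊤ : SimpleGraph Bool)) (w, s) (e.map (·, t)) =
      edgeDist G w e + (⊤ : SimpleGraph Bool).dist s t := by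
  induction e using Sym2.ind with
  | _ x y => simp [hG.dist_boxProd connected_top, min_add_add_right]

lemma edgeDist_boxProd_top_bool_rung (hG : G.Connected) (w v : V) (s : Bool) :
    edgeDist (G □ (⊤ : SimpleGraph Bool)) (w, s) s((v, false), (v, true)) = G.dist w v := by
  cases s <;> simp [hG.dist_boxProd connected_top]

theorem isEdgeGenerator_boxProd_top_bool (hG : G.Connected) {S : Set V} (hV : IsResolving G S)
    (hE : IsEdgeGenerator G S) {s₀ : V} (hs₀ : s₀ ∈ S) :
    IsEdgeGenerator (G □ (⊤ : SimpleGraph Bool)) (insert (s₀, true) ((·, false) '' S)) := by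
  intro e₁ h₁ e₂ h₂ hd
  have hlow (w : V) (hw : w ∈ S) := hd (w, false) (.inr ⟨w, hw, rfl⟩)
  have hhigh := hd (s₀, true) (Set.mem_insert _ _)
  have hlow₀ := hlow s₀ hs₀
  rcases edgeSet_boxProd_top_bool h₁ with ⟨e₁, he₁, t₁, rfl⟩ | ⟨v₁, rfl⟩ <;>
    rcases edgeSet_boxProd_top_bool h₂ with ⟨e₂, he₂, t₂, rfl⟩ | ⟨v₂, rfl⟩ <;>
    simp only [edgeDist_boxProd_top_bool_map hG, edgeDist_boxProd_top_bool_rung hG, dist_top]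
      at hlow hhigh hlow₀
  · obtain rfl : t₁ = t₂ := by
      cases t₁ <;> cases t₂ <;>
        simp only [Bool.false_eq_true, Bool.true_eq_false, ↓reduceIte, add_zero]
          at hhigh hlow₀ ⊢ <;>
        omega
    rw [hE e₁ he₁ e₂ he₂ fun w hw => by simpa using hlow w hw]
  · cases t₁ <;>
      simp only [Bool.false_eq_true, Bool.true_eq_false, ↓reduceIte, add_zero] at hhigh hlow₀ <;>
      omega
  · cases t₂ <;>
      simp only [Bool.false_eq_true, Bool.true_eq_false, ↓reduceIte, add_zero] at hhigh hlow₀ <;>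
      omega
  · rw [hV v₁ v₂ hlow]

end BoxProdBool

section Cycle

def cycleNorm {n : ℕ} (x : Fin n) : ℕ := min x.val (n - x.val)

variable {m : ℕ}

lemma cycleNorm_eq_zero {x : Fin (m + 1)} : cycleNorm x = 0 ↔ x = 0 := by
  simp only [cycleNorm, Fin.ext_iff, Fin.val_zero]
  omega

lemma cycleNorm_add_one_le (x : Fin (m + 1)) : cycleNorm (x + 1) ≤ cycleNorm x + 1 := by
  simp only [cycleNorm, Fin.val_add_one, Fin.ext_iff, Fin.val_last]
  split_ifs <;> omega

lemma cycleNorm_le_cycleNorm_add_one_add_one (x : Fin (m + 1)) :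
    cycleNorm x ≤ cycleNorm (x + 1) + 1 := by
  simp only [cycleNorm, Fin.val_add_one, Fin.ext_iff, Fin.val_last]
  split_ifs <;> omega

lemma cycleNorm_sub_one_or_add_one {x : Fin (m + 1)} (hx : x ≠ 0) :
    cycleNorm (x - 1) + 1 = cycleNorm x ∨ cycleNorm (x + 1) + 1 = cycleNorm x := by
  rw [Ne, Fin.ext_iff, Fin.val_zero] at hx
  simp only [cycleNorm, Fin.val_add_one, Fin.coe_sub_one, Fin.ext_iff, Fin.val_last,
    Fin.val_zero]
  split_ifs <;> omega

lemma Fin.add_one_ne_sub_one (i : Fin (m + 3)) : i + 1 ≠ i - 1 := by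
  simp only [ne_eq, Fin.ext_iff, Fin.val_add_one, Fin.coe_sub_one, Fin.val_last, Fin.val_zero]
  split_ifs <;> omega

lemma cycleGraph_adj_add_one (i : Fin (m + 2)) : (cycleGraph (m + 2)).Adj i (i + 1) := by
  simp [cycleGraph_adj]

lemma cycleGraph_adj_sub_one (i : Fin (m + 2)) : (cycleGraph (m + 2)).Adj i (i - 1) := by
  have := (cycleGraph_adj_add_one (i - 1)).symm
  rwa [sub_add_cancel] at this

theorem dist_cycleGraph (u v : Fin (m + 2)) :
    (cycleGraph (m + 2)).dist u v = cycleNorm (v - u) := by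
  refine dist_eq_of_descent (fun v => by rw [cycleNorm_eq_zero, sub_eq_zero]) ?_ ?_ v
  · rintro x y (hxy | hyx)
    · have hx : x - u = y - u + 1 := by rw [← hxy]; abel
      simpa [hx] using cycleNorm_le_cycleNorm_add_one_add_one (y - u)
    · have hy : y - u = x - u + 1 := by rw [← hyx]; abel
      simpa [hy] using cycleNorm_add_one_le (x - u)
  · intro v hv
    rcases cycleNorm_sub_one_or_add_one (mt cycleNorm_eq_zero.2 hv) with h | h
    · exact ⟨v - 1, (cycleGraph_adj_sub_one v).symm, by rwa [sub_right_comm]⟩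
    · exact ⟨v + 1, (cycleGraph_adj_add_one v).symm, by rwa [add_sub_right_comm]⟩

lemma edgeSet_cycleGraph {e : Sym2 (Fin (m + 2))} (he : e ∈ (cycleGraph (m + 2)).edgeSet) :
    ∃ j, e = s(j, j + 1) := by
  induction e using Sym2.ind with
  | _ x y =>
    rw [mem_edgeSet, cycleGraph_adj, sub_eq_iff_eq_add', sub_eq_iff_eq_add'] at he
    rcases he with rfl | rfl
    · exact ⟨y, Sym2.eq_swap⟩
    · exact ⟨x, rfl⟩

theorem isResolving_cycleGraph_zero_one : IsResolving (cycleGraph (m + 3)) {0, 1} := by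
  intro j k h
  have h₀ := h 0 (by simp)
  have h₁ := h 1 (by simp)
  simp only [dist_cycleGraph, sub_zero, cycleNorm, Fin.coe_sub_one, Fin.ext_iff,
    Fin.val_zero] at h₀ h₁
  rw [Fin.ext_iff]
  split_ifs at h₁ <;> omega

theorem isEdgeGenerator_cycleGraph_zero_one : IsEdgeGenerator (cycleGraph (m + 3)) {0, 1} := by
  intro e₁ he₁ e₂ he₂ h
  obtain ⟨j, rfl⟩ := edgeSet_cycleGraph he₁
  obtain ⟨k, rfl⟩ := edgeSet_cycleGraph he₂
  have h₀ := h 0 (by simp)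
  have h₁ := h 1 (by simp)
  simp only [edgeDist_mk, dist_cycleGraph, sub_zero, add_sub_cancel_right, cycleNorm,
    Fin.coe_sub_one, Fin.val_add_one, Fin.ext_iff, Fin.val_zero, Fin.val_last] at h₀ h₁
  obtain rfl : j = k := by
    rw [Fin.ext_iff]
    split_ifs at h₀ h₁ <;> omega
  rfl

end Cycle

lemma cycleGraph_adj_iff_val {m : ℕ} {i j : Fin (m + 2)} :
    (cycleGraph (m + 2)).Adj i j ↔ (j : ℕ) = (i + 1) % (m + 2) ∨ (i : ℕ) = (j + 1) % (m + 2) := by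
  simp only [cycleGraph_adj, sub_eq_iff_eq_add', Fin.ext_iff, Fin.val_add, Fin.val_one]
  exact or_comm

def prismIso (m : ℕ) : GP (m + 2) 1 ≃g cycleGraph (m + 2) □ (⊤ : SimpleGraph Bool) where
  toFun := Sum.elim (·, false) (·, true)
  invFun p := bif p.2 then .inr p.1 else .inl p.1
  left_inv := by rintro (i | i) <;> rfl
  right_inv := by rintro ⟨i, _ | _⟩ <;> rfl
  map_rel_iff' := by
    have hne (i j : Fin (m + 2)) (h : (cycleGraph (m + 2)).Adj i j) : i ≠ j := h.ne
    rintro (i | i) (j | j) <;>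
      simp +contextual [GP, boxProd_adj, ← cycleGraph_adj_iff_val, eq_comm, hne]

theorem edgeMetricDim_cycleGraph_boxProd_top_bool (m : ℕ) :
    edgeMetricDim (cycleGraph (m + 3) □ (⊤ : SimpleGraph Bool)) = 3 := by
  refine edgeMetricDim_eq_of_isEdgeGenerator (Set.toFinite _)
    (isEdgeGenerator_boxProd_top_bool cycleGraph_connected isResolving_cycleGraph_zero_one
      isEdgeGenerator_cycleGraph_zero_one (s₀ := 0) (by simp)) ?_
    fun T hT hgen => three_le_ncard_of_isEdgeGenerator ?_ hT hgen
  · rw [Set.ncard_insert_of_notMem (by simp),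
      Set.ncard_image_of_injective _ (Prod.mk_left_injective false), Set.ncard_pair (by simp)]
  · rintro ⟨i, s⟩
    refine ⟨(i + 1, s), (i - 1, s), (i, !s), ?_, ?_, ?_, ?_, ?_, ?_⟩ <;>
      simp [boxProd_adj, cycleGraph_adj_add_one, cycleGraph_adj_sub_one, Fin.add_one_ne_sub_one]

/-- For every `n ≥ 3`, `β_E(GP(n,1)) = 3`. -/
theorem stmt4 (n : ℕ) (hn : 3 ≤ n) : edgeMetricDim (GP n 1) = 3 := by
  obtain ⟨m, rfl⟩ : ∃ m, n = m + 3 := ⟨n - 3, by omega⟩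
  exact (edgeMetricDim_congr (prismIso (m + 1))).trans
    (edgeMetricDim_cycleGraph_boxProd_top_bool m)
end

section
/- The edge metric dimension of the Petersen graph GP(5,2) equals 4, with {u_0, u_1, u_3, v_3} an edge metric basis. -/
open SimpleGraph

/-!
The Petersen graph has diameter 2, so the distance between two vertices is 0, 1 or 2 according
to whether they are equal, adjacent or neither. With this explicit distance function, both the
fact that `{u₀, u₁, u₃, v₃}` separates the 15 edges and the fact that no three vertices do are
finite computations. Edge metric generators are closed upwards, and every set of at most three
vertices lies in a set of exactly three, which gives the lower bound.
-/

section EdgeMetricDimension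

variable {V : Type*} {G : SimpleGraph V}

lemma dist_eq_ite_of_exists_common_neighbor [DecidableEq V] [DecidableRel G.Adj]
    (h : ∀ u v, u ≠ v → ¬G.Adj u v → ∃ w, G.Adj u w ∧ G.Adj v w) (u v : V) :
    G.dist u v = if u = v then 0 else if G.Adj u v then 1 else 2 := by
  split_ifs with huv hadj
  · rw [huv, dist_self]
  · exact dist_eq_one_iff_adj.2 hadj
  · obtain ⟨w, hw⟩ := h u v huv hadj
    show (G.edist u v).toNat = 2
    rw [edist_eq_two_iff.2 ⟨huv, hadj, w, hw⟩]
    rfl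

lemma isEdgeGenerator_iff {S : Set V} :
    IsEdgeGenerator G S ↔ ∀ x y x' y', G.Adj x y → G.Adj x' y' →
      (∀ w ∈ S, min (G.dist w x) (G.dist w y) = min (G.dist w x') (G.dist w y')) →
        s(x, y) = s(x', y') := by
  refine ⟨fun h x y x' y' hxy hxy' hS => h _ hxy _ hxy' hS, fun h e₁ he₁ e₂ he₂ hS => ?_⟩
  induction e₁ using Sym2.ind with | _ x y => ?_
  induction e₂ using Sym2.ind with | _ x' y' => ?_
  exact h x y x' y' he₁ he₂ hS

lemma IsEdgeGenerator.mono {S T : Set V} (hS : IsEdgeGenerator G S) (hST : S ⊆ T) :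
    IsEdgeGenerator G T :=
  fun e₁ he₁ e₂ he₂ h => hS e₁ he₁ e₂ he₂ fun w hw => h w (hST hw)

lemma not_isEdgeGenerator_of_ncard_le {m : ℕ} (hm : m ≤ Nat.card V)
    (h : ∀ T : Set V, T.ncard = m → ¬IsEdgeGenerator G T) {S : Set V} (hS : S.ncard ≤ m) :
    ¬IsEdgeGenerator G S := fun hgen => by
  obtain ⟨T, hST, -, hT⟩ :=
    Set.exists_subsuperset_card_eq (Set.subset_univ S) hS (by rwa [Set.ncard_univ])
  exact h T hT (hgen.mono hST)

lemma edgeMetricDim_eq_ncard {S : Set V} (hS : S.Finite) (hgen : IsEdgeGenerator G S)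
    (hmin : ∀ T : Set V, T.Finite → T.ncard < S.ncard → ¬IsEdgeGenerator G T) :
    edgeMetricDim G = S.ncard := by
  have hmem : S.ncard ∈ {n | ∃ S : Set V, S.Finite ∧ S.ncard = n ∧ IsEdgeGenerator G S} :=
    ⟨S, hS, rfl, hgen⟩
  refine le_antisymm (Nat.sInf_le hmem) (le_csInf ⟨_, hmem⟩ ?_)
  rintro n ⟨T, hT, rfl, hgenT⟩
  by_contra! hlt
  exact hmin T hT hlt hgenT

end EdgeMetricDimension

section GeneralizedPetersen

def gpAdjBool (n k : ℕ) : Fin n ⊕ Fin n → Fin n ⊕ Fin n → Bool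
  | .inl i, .inl j => (j : ℕ) == ((i : ℕ) + 1) % n
  | .inl i, .inr j => i == j
  | .inr i, .inr j => (j : ℕ) == ((i : ℕ) + k) % n
  | _, _ => false

lemma gp_adj_iff (n k : ℕ) (a b : Fin n ⊕ Fin n) :
    (GP n k).Adj a b ↔ a ≠ b ∧ (gpAdjBool n k a b || gpAdjBool n k b a) := by
  rw [GP, fromRel_adj]
  rcases a with i | i <;> rcases b with j | j <;> simp [gpAdjBool, Fin.ext_iff]

instance (n k : ℕ) : DecidableRel (GP n k).Adj :=
  fun a b => decidable_of_iff' _ (gp_adj_iff n k a b)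

def gp52Dist (x y : Fin 5 ⊕ Fin 5) : ℕ :=
  if x = y then 0 else if (GP 5 2).Adj x y then 1 else 2

lemma gp52_exists_common_neighbor :
    ∀ u v : Fin 5 ⊕ Fin 5, u ≠ v → ¬(GP 5 2).Adj u v →
      ∃ w, (GP 5 2).Adj u w ∧ (GP 5 2).Adj v w := by
  decide

lemma gp52_dist (x y : Fin 5 ⊕ Fin 5) : (GP 5 2).dist x y = gp52Dist x y :=
  dist_eq_ite_of_exists_common_neighbor gp52_exists_common_neighbor x y

lemma gp52_edges_separated :
    ∀ x y x' y' : Fin 5 ⊕ Fin 5, (GP 5 2).Adj x y → (GP 5 2).Adj x' y' →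
      (∀ w ∈ [.inl 0, .inl 1, .inl 3, .inr 3],
        min (gp52Dist w x) (gp52Dist w y) = min (gp52Dist w x') (gp52Dist w y')) →
      s(x, y) = s(x', y') := by
  decide

theorem gp52_isEdgeGenerator :
    IsEdgeGenerator (GP 5 2) {.inl 0, .inl 1, .inl 3, .inr 3} := by
  simp only [isEdgeGenerator_iff, gp52_dist]
  intro x y x' y' hxy hxy' hS
  exact gp52_edges_separated x y x' y' hxy hxy' fun w hw => hS w (by simpa using hw)

def gp52Edges : List ((Fin 5 ⊕ Fin 5) × (Fin 5 ⊕ Fin 5)) :=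
  [(.inl 0, .inl 1), (.inl 1, .inl 2), (.inl 2, .inl 3), (.inl 3, .inl 4), (.inl 4, .inl 0),
    (.inl 0, .inr 0), (.inl 1, .inr 1), (.inl 2, .inr 2), (.inl 3, .inr 3), (.inl 4, .inr 4),
    (.inr 0, .inr 2), (.inr 1, .inr 3), (.inr 2, .inr 4), (.inr 3, .inr 0), (.inr 4, .inr 1)]

lemma gp52Edges_adj : ∀ p ∈ gp52Edges, (GP 5 2).Adj p.1 p.2 := by
  decide

lemma gp52Edges_nodup : (gp52Edges.map fun p => s(p.1, p.2)).Nodup := by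
  decide

-- Comparing list entries instead of `Sym2` values keeps the kernel computation cheap;
-- `gp52Edges_nodup` turns `p ≠ q` into distinctness of the edges.
lemma gp52_exists_edges_not_separated (a b c : Fin 5 ⊕ Fin 5) :
    ∃ p ∈ gp52Edges, ∃ q ∈ gp52Edges, p ≠ q ∧ ∀ w ∈ [a, b, c],
      min (gp52Dist w p.1) (gp52Dist w p.2) =
        min (gp52Dist w q.1) (gp52Dist w q.2) := by
  revert a b c
  decide

theorem gp52_not_isEdgeGenerator_three (a b c : Fin 5 ⊕ Fin 5) :
    ¬IsEdgeGenerator (GP 5 2) {a, b, c} := by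
  obtain ⟨p, hp, q, hq, hpq, hpqS⟩ := gp52_exists_edges_not_separated a b c
  simp only [isEdgeGenerator_iff, gp52_dist]
  intro h
  refine hpq (List.inj_on_of_nodup_map gp52Edges_nodup hp hq ?_)
  exact h _ _ _ _ (gp52Edges_adj p hp) (gp52Edges_adj q hq) fun w hw => hpqS w (by simpa using hw)

end GeneralizedPetersen

/-- `β_E(GP(5,2)) = 4` with `{u₀,u₁,u₃,v₃}` an edge metric basis. -/
theorem stmt7 :
    edgeMetricDim (GP 5 2) = 4 ∧
    IsEdgeGenerator (GP 5 2)
      {Sum.inl 0, Sum.inl 1, Sum.inl 3, Sum.inr 3} ∧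
    ({Sum.inl 0, Sum.inl 1, Sum.inl 3, Sum.inr 3} : Set (Fin 5 ⊕ Fin 5)).ncard = 4 := by
  have hcard : ({Sum.inl 0, Sum.inl 1, Sum.inl 3, Sum.inr 3} : Set (Fin 5 ⊕ Fin 5)).ncard = 4 := by
    rw [Set.ncard_eq_toFinset_card']
    rfl
  have hsmall (T : Set (Fin 5 ⊕ Fin 5)) (hT : T.ncard ≤ 3) : ¬IsEdgeGenerator (GP 5 2) T := by
    refine not_isEdgeGenerator_of_ncard_le (by simp) (fun T hT => ?_) hT
    obtain ⟨a, b, c, -, -, -, rfl⟩ := Set.ncard_eq_three.1 hT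
    exact gp52_not_isEdgeGenerator_three a b c
  refine ⟨?_, gp52_isEdgeGenerator, hcard⟩
  rw [← hcard]
  exact edgeMetricDim_eq_ncard (Set.toFinite _) gp52_isEdgeGenerator
    fun T _ hT => hsmall T (by omega)
end
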